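/- Let d be a smooth function on an open set of ℝ³ satisfying |∇d| = 1, let κ = Δd and let K be the product of the two nonzero eigenvalues of the Hessian ∇²d (the Gaussian curvature). Then at every point of the zero level set {d = 0}, Δ²d = Δ_Γ κ + κ(κ² − 4K), where Δ_Γ κ = Δ(κ ∘ p)|_{d=0} with p(x) = x − d(x)∇d(x). -/

import Mathlib

open scoped BigOperators

/-- Partial derivative in direction `i`. -/
noncomputable def pd {n : ℕ} (i : Fin n) (f : (Fin n → ℝ) → ℝ) : (Fin n → ℝ) → ℝ :=
  fun x => fderiv ℝ f x (Pi.single i 1)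

/-- Laplacian. -/
noncomputable def lap {n : ℕ} (f : (Fin n → ℝ) → ℝ) : (Fin n → ℝ) → ℝ :=
  fun x => ∑ i, pd i (pd i f) x

/-- Hessian matrix. -/
noncomputable def hess {n : ℕ} (f : (Fin n → ℝ) → ℝ) (x : Fin n → ℝ) :
    Matrix (Fin n) (Fin n) ℝ :=
  Matrix.of fun i j => pd i (pd j f) x

/-- Projection onto the zero level set: `p(x) = x − d(x) ∇d(x)`. -/
noncomputable def proj {n : ℕ} (d : (Fin n → ℝ) → ℝ) (x : Fin n → ℝ) : Fin n → ℝ :=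
  fun i => x i - d x * pd i d x

/-- Gaussian curvature: since `∇d` is an eigenvector of the Hessian with eigenvalue `0`,
the product `K = κ₁ κ₂` of the two remaining eigenvalues satisfies
`Tr[(∇²d)²] = κ₁² + κ₂² = (Δd)² − 2K`. -/
noncomputable def gaussK {n : ℕ} (d : (Fin n → ℝ) → ℝ) (x : Fin n → ℝ) : ℝ :=
  ((lap d x) ^ 2 - Matrix.trace (hess d x * hess d x)) / 2

section
open scoped ContDiff

section Helpers

variable {N : ℕ}

lemma pd_congr {i : Fin N} {f g : (Fin N → ℝ) → ℝ} {x : Fin N → ℝ}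
    (h : f =ᶠ[nhds x] g) : pd i f x = pd i g x := by
  unfold pd; rw [h.fderiv_eq]

lemma pd_of_eqOn {U : Set (Fin N → ℝ)} (hU : IsOpen U) {f g : (Fin N → ℝ) → ℝ}
    (h : ∀ y ∈ U, f y = g y) {x : Fin N → ℝ} (hx : x ∈ U) (i : Fin N) :
    pd i f x = pd i g x :=
  pd_congr (by filter_upwards [hU.mem_nhds hx] using h)

lemma contDiffOn_pd {U : Set (Fin N → ℝ)} (hU : IsOpen U) {f : (Fin N → ℝ) → ℝ}
    (hf : ContDiffOn ℝ ∞ f U) (i : Fin N) : ContDiffOn ℝ ∞ (pd i f) U := by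
  have h1 : ContDiffOn ℝ ∞ (fun x => fderiv ℝ f x) U :=
    hf.fderiv_of_isOpen hU (le_of_eq rfl)
  exact h1.clm_apply contDiffOn_const

lemma diffAt {U : Set (Fin N → ℝ)} (hU : IsOpen U) {f : (Fin N → ℝ) → ℝ}
    (hf : ContDiffOn ℝ ∞ f U) {x : Fin N → ℝ} (hx : x ∈ U) :
    DifferentiableAt ℝ f x :=
  (hf.differentiableOn (by decide)).differentiableAt (hU.mem_nhds hx)

lemma pd_sum {ι : Type*} (s : Finset ι) (f : ι → (Fin N → ℝ) → ℝ) {x : Fin N → ℝ}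
    (hf : ∀ k ∈ s, DifferentiableAt ℝ (f k) x) (i : Fin N) :
    pd i (fun y => ∑ k ∈ s, f k y) x = ∑ k ∈ s, pd i (f k) x := by
  unfold pd
  rw [fderiv_fun_sum hf]
  simp

lemma pd_mul {f g : (Fin N → ℝ) → ℝ} {x : Fin N → ℝ}
    (hf : DifferentiableAt ℝ f x) (hg : DifferentiableAt ℝ g x) (i : Fin N) :
    pd i (fun y => f y * g y) x = pd i f x * g x + f x * pd i g x := by
  unfold pd
  rw [fderiv_fun_mul hf hg]
  simp [smul_eq_mul]
  ring

lemma pd_const (i : Fin N) (c : ℝ) (x : Fin N → ℝ) : pd i (fun _ => c) x = 0 := by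
  unfold pd; simp

lemma pd_add {f g : (Fin N → ℝ) → ℝ} {x : Fin N → ℝ}
    (hf : DifferentiableAt ℝ f x) (hg : DifferentiableAt ℝ g x) (i : Fin N) :
    pd i (fun y => f y + g y) x = pd i f x + pd i g x := by
  unfold pd
  rw [fderiv_fun_add hf hg]; simp

lemma pd_sub {f g : (Fin N → ℝ) → ℝ} {x : Fin N → ℝ}
    (hf : DifferentiableAt ℝ f x) (hg : DifferentiableAt ℝ g x) (i : Fin N) :
    pd i (fun y => f y - g y) x = pd i f x - pd i g x := by
  unfold pd
  rw [fderiv_fun_sub hf hg]; simp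

lemma pd_coord (i j : Fin N) (x : Fin N → ℝ) :
    pd i (fun y => y j) x = (Pi.single i 1 : Fin N → ℝ) j := by
  unfold pd
  rw [show (fun y : Fin N → ℝ => y j) = (ContinuousLinearMap.proj j :
    (Fin N → ℝ) →L[ℝ] ℝ) from rfl, ContinuousLinearMap.fderiv]
  rfl

lemma fderiv_eval {f : (Fin N → ℝ) → ℝ} {x : Fin N → ℝ} (hf : DifferentiableAt ℝ f x)
    (v : Fin N → ℝ) : fderiv ℝ f x v = ∑ l, v l * pd l f x := by
  have hv : v = ∑ l, v l • (Pi.single l 1 : Fin N → ℝ) := by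
    ext j
    simp [Pi.single_apply, Finset.sum_apply]
  conv_lhs => rw [hv]
  rw [map_sum]
  simp [pd, smul_eq_mul]

lemma pd_comp {f : (Fin N → ℝ) → ℝ} {p : (Fin N → ℝ) → (Fin N → ℝ)} {x : Fin N → ℝ}
    (hf : DifferentiableAt ℝ f (p x)) (hp : ∀ l, DifferentiableAt ℝ (fun y => p y l) x)
    (i : Fin N) :
    pd i (fun y => f (p y)) x = ∑ l, pd l f (p x) * pd i (fun y => p y l) x := by
  have hpd : DifferentiableAt ℝ p x := by
    rw [show p = (fun y l => p y l) from rfl]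
    exact differentiableAt_pi.2 hp
  have h1 : pd i (fun y => f (p y)) x
      = fderiv ℝ f (p x) (fderiv ℝ p x (Pi.single i 1)) := by
    unfold pd
    rw [show (fun y => f (p y)) = f ∘ p from rfl, fderiv_comp x hf hpd]
    rfl
  rw [h1, fderiv_eval hf]
  refine Finset.sum_congr rfl fun l _ => ?_
  rw [mul_comm]
  congr 1
  rw [show p = (fun y l => p y l) from rfl, fderiv_pi hp]
  rfl

lemma pd_comm {U : Set (Fin N → ℝ)} (hU : IsOpen U) {f : (Fin N → ℝ) → ℝ}
    (hf : ContDiffOn ℝ ∞ f U) {x : Fin N → ℝ} (hx : x ∈ U) (i j : Fin N) :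
    pd i (pd j f) x = pd j (pd i f) x := by
  have hsymm : IsSymmSndFDerivAt ℝ f x :=
    (hf.contDiffAt (hU.mem_nhds hx)).isSymmSndFDerivAt (by rw [minSmoothness_of_isRCLikeNormedField]; exact WithTop.coe_le_coe.2 (le_top : (2:ℕ∞) ≤ ⊤))
  have hdf : DifferentiableAt ℝ (fderiv ℝ f) x :=
    ((hf.fderiv_of_isOpen hU (m := ∞) (le_of_eq rfl)).differentiableOn
      (by decide)).differentiableAt (hU.mem_nhds hx)
  have key : ∀ a b : Fin N, pd a (pd b f) x
      = fderiv ℝ (fderiv ℝ f) x (Pi.single a 1) (Pi.single b 1) := by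
    intro a b
    unfold pd
    have h2 : (fun y => fderiv ℝ f y (Pi.single b 1))
        = (ContinuousLinearMap.apply ℝ ℝ (Pi.single b (1:ℝ))) ∘ (fderiv ℝ f) := rfl
    rw [h2, fderiv_comp x (ContinuousLinearMap.apply ℝ ℝ
      (Pi.single b (1:ℝ))).differentiableAt hdf, ContinuousLinearMap.fderiv]
    rfl
  rw [key i j, key j i, hsymm]

end Helpers

set_option maxHeartbeats 2000000 in
lemma key (G : Fin 3 → ℝ) (Hm : Fin 3 → Fin 3 → ℝ) (Tm : Fin 3 → Fin 3 → Fin 3 → ℝ)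
    (Fm : Fin 3 → Fin 3 → Fin 3 → Fin 3 → ℝ)
    (hH : ∀ a b, Hm a b = Hm b a)
    (hT12 : ∀ a b c, Tm a b c = Tm b a c)
    (hT23 : ∀ a b c, Tm a b c = Tm a c b)
    (hF12 : ∀ a b c e, Fm a b c e = Fm b a c e)
    (hF23 : ∀ a b c e, Fm a b c e = Fm a c b e)
    (hF34 : ∀ a b c e, Fm a b c e = Fm a b e c)
    (c0 : ∑ i, (G i) ^ 2 = 1)
    (c1 : ∀ j, ∑ i, G i * Hm j i = 0)
    (c2 : ∀ j k, ∑ i, (Hm k i * Hm j i + G i * Tm k j i) = 0)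
    (c3 : ∀ j k l, ∑ i, (Tm l k i * Hm j i + Hm k i * Tm l j i
        + (Hm l i * Tm k j i + G i * Fm l k j i)) = 0) :
    ∑ j, ∑ k, Fm j j k k
      = (∑ i, ∑ l, ((∑ m, (∑ k, Fm m l k k) * ((Pi.single i 1 : Fin 3 → ℝ) m - G i * G m))
            * ((Pi.single i 1 : Fin 3 → ℝ) l - G i * G l)
          + (∑ k, Tm l k k) * (-(Hm i i * G l + 2 * (G i * Hm i l)))))
        + (∑ i, Hm i i) * ((∑ i, Hm i i) ^ 2
            - 4 * (((∑ i, Hm i i) ^ 2 - ∑ i, ∑ j, Hm i j * Hm j i) / 2)) := by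
  have eH10 : Hm 1 0 = Hm 0 1 := hH 1 0
  have eH20 : Hm 2 0 = Hm 0 2 := hH 2 0
  have eH21 : Hm 2 1 = Hm 1 2 := hH 2 1
  have eT010 : Tm 0 1 0 = Tm 0 0 1 := hT23 0 1 0
  have eT020 : Tm 0 2 0 = Tm 0 0 2 := hT23 0 2 0
  have eT021 : Tm 0 2 1 = Tm 0 1 2 := hT23 0 2 1
  have eT100 : Tm 1 0 0 = Tm 0 0 1 := (hT12 1 0 0).trans (hT23 0 1 0)
  have eT101 : Tm 1 0 1 = Tm 0 1 1 := hT12 1 0 1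
  have eT102 : Tm 1 0 2 = Tm 0 1 2 := hT12 1 0 2
  have eT110 : Tm 1 1 0 = Tm 0 1 1 := (hT23 1 1 0).trans (hT12 1 0 1)
  have eT120 : Tm 1 2 0 = Tm 0 1 2 := (hT23 1 2 0).trans (hT12 1 0 2)
  have eT121 : Tm 1 2 1 = Tm 1 1 2 := hT23 1 2 1
  have eT200 : Tm 2 0 0 = Tm 0 0 2 := (hT12 2 0 0).trans (hT23 0 2 0)
  have eT201 : Tm 2 0 1 = Tm 0 1 2 := (hT12 2 0 1).trans (hT23 0 2 1)
  have eT202 : Tm 2 0 2 = Tm 0 2 2 := hT12 2 0 2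
  have eT210 : Tm 2 1 0 = Tm 0 1 2 := ((hT12 2 1 0).trans (hT23 1 2 0)).trans (hT12 1 0 2)
  have eT211 : Tm 2 1 1 = Tm 1 1 2 := (hT12 2 1 1).trans (hT23 1 2 1)
  have eT212 : Tm 2 1 2 = Tm 1 2 2 := hT12 2 1 2
  have eT220 : Tm 2 2 0 = Tm 0 2 2 := (hT23 2 2 0).trans (hT12 2 0 2)
  have eT221 : Tm 2 2 1 = Tm 1 2 2 := (hT23 2 2 1).trans (hT12 2 1 2)
  have eF0010 : Fm 0 0 1 0 = Fm 0 0 0 1 := hF34 0 0 1 0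
  have eF0020 : Fm 0 0 2 0 = Fm 0 0 0 2 := hF34 0 0 2 0
  have eF0021 : Fm 0 0 2 1 = Fm 0 0 1 2 := hF34 0 0 2 1
  have eF0100 : Fm 0 1 0 0 = Fm 0 0 0 1 := (hF23 0 1 0 0).trans (hF34 0 0 1 0)
  have eF0101 : Fm 0 1 0 1 = Fm 0 0 1 1 := hF23 0 1 0 1
  have eF0102 : Fm 0 1 0 2 = Fm 0 0 1 2 := hF23 0 1 0 2
  have eF0110 : Fm 0 1 1 0 = Fm 0 0 1 1 := (hF34 0 1 1 0).trans (hF23 0 1 0 1)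
  have eF0120 : Fm 0 1 2 0 = Fm 0 0 1 2 := (hF34 0 1 2 0).trans (hF23 0 1 0 2)
  have eF0121 : Fm 0 1 2 1 = Fm 0 1 1 2 := hF34 0 1 2 1
  have eF0200 : Fm 0 2 0 0 = Fm 0 0 0 2 := (hF23 0 2 0 0).trans (hF34 0 0 2 0)
  have eF0201 : Fm 0 2 0 1 = Fm 0 0 1 2 := (hF23 0 2 0 1).trans (hF34 0 0 2 1)
  have eF0202 : Fm 0 2 0 2 = Fm 0 0 2 2 := hF23 0 2 0 2
  have eF0210 : Fm 0 2 1 0 = Fm 0 0 1 2 := ((hF23 0 2 1 0).trans (hF34 0 1 2 0)).trans (hF23 0 1 0 2)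
  have eF0211 : Fm 0 2 1 1 = Fm 0 1 1 2 := (hF23 0 2 1 1).trans (hF34 0 1 2 1)
  have eF0212 : Fm 0 2 1 2 = Fm 0 1 2 2 := hF23 0 2 1 2
  have eF0220 : Fm 0 2 2 0 = Fm 0 0 2 2 := (hF34 0 2 2 0).trans (hF23 0 2 0 2)
  have eF0221 : Fm 0 2 2 1 = Fm 0 1 2 2 := (hF34 0 2 2 1).trans (hF23 0 2 1 2)
  have eF1000 : Fm 1 0 0 0 = Fm 0 0 0 1 := ((hF12 1 0 0 0).trans (hF23 0 1 0 0)).trans (hF34 0 0 1 0)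
  have eF1001 : Fm 1 0 0 1 = Fm 0 0 1 1 := (hF12 1 0 0 1).trans (hF23 0 1 0 1)
  have eF1002 : Fm 1 0 0 2 = Fm 0 0 1 2 := (hF12 1 0 0 2).trans (hF23 0 1 0 2)
  have eF1010 : Fm 1 0 1 0 = Fm 0 0 1 1 := ((hF12 1 0 1 0).trans (hF34 0 1 1 0)).trans (hF23 0 1 0 1)
  have eF1011 : Fm 1 0 1 1 = Fm 0 1 1 1 := hF12 1 0 1 1
  have eF1012 : Fm 1 0 1 2 = Fm 0 1 1 2 := hF12 1 0 1 2
  have eF1020 : Fm 1 0 2 0 = Fm 0 0 1 2 := ((hF12 1 0 2 0).trans (hF34 0 1 2 0)).trans (hF23 0 1 0 2)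
  have eF1021 : Fm 1 0 2 1 = Fm 0 1 1 2 := (hF12 1 0 2 1).trans (hF34 0 1 2 1)
  have eF1022 : Fm 1 0 2 2 = Fm 0 1 2 2 := hF12 1 0 2 2
  have eF1100 : Fm 1 1 0 0 = Fm 0 0 1 1 := (((hF23 1 1 0 0).trans (hF34 1 0 1 0)).trans (hF12 1 0 0 1)).trans (hF23 0 1 0 1)
  have eF1101 : Fm 1 1 0 1 = Fm 0 1 1 1 := (hF23 1 1 0 1).trans (hF12 1 0 1 1)
  have eF1102 : Fm 1 1 0 2 = Fm 0 1 1 2 := (hF23 1 1 0 2).trans (hF12 1 0 1 2)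
  have eF1110 : Fm 1 1 1 0 = Fm 0 1 1 1 := ((hF34 1 1 1 0).trans (hF23 1 1 0 1)).trans (hF12 1 0 1 1)
  have eF1120 : Fm 1 1 2 0 = Fm 0 1 1 2 := ((hF34 1 1 2 0).trans (hF23 1 1 0 2)).trans (hF12 1 0 1 2)
  have eF1121 : Fm 1 1 2 1 = Fm 1 1 1 2 := hF34 1 1 2 1
  have eF1200 : Fm 1 2 0 0 = Fm 0 0 1 2 := (((hF23 1 2 0 0).trans (hF34 1 0 2 0)).trans (hF12 1 0 0 2)).trans (hF23 0 1 0 2)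
  have eF1201 : Fm 1 2 0 1 = Fm 0 1 1 2 := ((hF23 1 2 0 1).trans (hF34 1 0 2 1)).trans (hF12 1 0 1 2)
  have eF1202 : Fm 1 2 0 2 = Fm 0 1 2 2 := (hF23 1 2 0 2).trans (hF12 1 0 2 2)
  have eF1210 : Fm 1 2 1 0 = Fm 0 1 1 2 := (((hF23 1 2 1 0).trans (hF34 1 1 2 0)).trans (hF23 1 1 0 2)).trans (hF12 1 0 1 2)
  have eF1211 : Fm 1 2 1 1 = Fm 1 1 1 2 := (hF23 1 2 1 1).trans (hF34 1 1 2 1)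
  have eF1212 : Fm 1 2 1 2 = Fm 1 1 2 2 := hF23 1 2 1 2
  have eF1220 : Fm 1 2 2 0 = Fm 0 1 2 2 := ((hF34 1 2 2 0).trans (hF23 1 2 0 2)).trans (hF12 1 0 2 2)
  have eF1221 : Fm 1 2 2 1 = Fm 1 1 2 2 := (hF34 1 2 2 1).trans (hF23 1 2 1 2)
  have eF2000 : Fm 2 0 0 0 = Fm 0 0 0 2 := ((hF12 2 0 0 0).trans (hF23 0 2 0 0)).trans (hF34 0 0 2 0)
  have eF2001 : Fm 2 0 0 1 = Fm 0 0 1 2 := ((hF12 2 0 0 1).trans (hF23 0 2 0 1)).trans (hF34 0 0 2 1)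
  have eF2002 : Fm 2 0 0 2 = Fm 0 0 2 2 := (hF12 2 0 0 2).trans (hF23 0 2 0 2)
  have eF2010 : Fm 2 0 1 0 = Fm 0 0 1 2 := (((hF12 2 0 1 0).trans (hF23 0 2 1 0)).trans (hF34 0 1 2 0)).trans (hF23 0 1 0 2)
  have eF2011 : Fm 2 0 1 1 = Fm 0 1 1 2 := ((hF12 2 0 1 1).trans (hF23 0 2 1 1)).trans (hF34 0 1 2 1)
  have eF2012 : Fm 2 0 1 2 = Fm 0 1 2 2 := (hF12 2 0 1 2).trans (hF23 0 2 1 2)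
  have eF2020 : Fm 2 0 2 0 = Fm 0 0 2 2 := ((hF12 2 0 2 0).trans (hF34 0 2 2 0)).trans (hF23 0 2 0 2)
  have eF2021 : Fm 2 0 2 1 = Fm 0 1 2 2 := ((hF12 2 0 2 1).trans (hF34 0 2 2 1)).trans (hF23 0 2 1 2)
  have eF2022 : Fm 2 0 2 2 = Fm 0 2 2 2 := hF12 2 0 2 2
  have eF2100 : Fm 2 1 0 0 = Fm 0 0 1 2 := ((((hF12 2 1 0 0).trans (hF23 1 2 0 0)).trans (hF34 1 0 2 0)).trans (hF12 1 0 0 2)).trans (hF23 0 1 0 2)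
  have eF2101 : Fm 2 1 0 1 = Fm 0 1 1 2 := (((hF12 2 1 0 1).trans (hF23 1 2 0 1)).trans (hF34 1 0 2 1)).trans (hF12 1 0 1 2)
  have eF2102 : Fm 2 1 0 2 = Fm 0 1 2 2 := ((hF12 2 1 0 2).trans (hF23 1 2 0 2)).trans (hF12 1 0 2 2)
  have eF2110 : Fm 2 1 1 0 = Fm 0 1 1 2 := ((((hF12 2 1 1 0).trans (hF23 1 2 1 0)).trans (hF34 1 1 2 0)).trans (hF23 1 1 0 2)).trans (hF12 1 0 1 2)
  have eF2111 : Fm 2 1 1 1 = Fm 1 1 1 2 := ((hF12 2 1 1 1).trans (hF23 1 2 1 1)).trans (hF34 1 1 2 1)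
  have eF2112 : Fm 2 1 1 2 = Fm 1 1 2 2 := (hF12 2 1 1 2).trans (hF23 1 2 1 2)
  have eF2120 : Fm 2 1 2 0 = Fm 0 1 2 2 := (((hF12 2 1 2 0).trans (hF34 1 2 2 0)).trans (hF23 1 2 0 2)).trans (hF12 1 0 2 2)
  have eF2121 : Fm 2 1 2 1 = Fm 1 1 2 2 := ((hF12 2 1 2 1).trans (hF34 1 2 2 1)).trans (hF23 1 2 1 2)
  have eF2122 : Fm 2 1 2 2 = Fm 1 2 2 2 := hF12 2 1 2 2
  have eF2200 : Fm 2 2 0 0 = Fm 0 0 2 2 := (((hF23 2 2 0 0).trans (hF34 2 0 2 0)).trans (hF12 2 0 0 2)).trans (hF23 0 2 0 2)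
  have eF2201 : Fm 2 2 0 1 = Fm 0 1 2 2 := (((hF23 2 2 0 1).trans (hF34 2 0 2 1)).trans (hF12 2 0 1 2)).trans (hF23 0 2 1 2)
  have eF2202 : Fm 2 2 0 2 = Fm 0 2 2 2 := (hF23 2 2 0 2).trans (hF12 2 0 2 2)
  have eF2210 : Fm 2 2 1 0 = Fm 0 1 2 2 := ((((hF23 2 2 1 0).trans (hF34 2 1 2 0)).trans (hF12 2 1 0 2)).trans (hF23 1 2 0 2)).trans (hF12 1 0 2 2)
  have eF2211 : Fm 2 2 1 1 = Fm 1 1 2 2 := (((hF23 2 2 1 1).trans (hF34 2 1 2 1)).trans (hF12 2 1 1 2)).trans (hF23 1 2 1 2)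
  have eF2212 : Fm 2 2 1 2 = Fm 1 2 2 2 := (hF23 2 2 1 2).trans (hF12 2 1 2 2)
  have eF2220 : Fm 2 2 2 0 = Fm 0 2 2 2 := ((hF34 2 2 2 0).trans (hF23 2 2 0 2)).trans (hF12 2 0 2 2)
  have eF2221 : Fm 2 2 2 1 = Fm 1 2 2 2 := ((hF34 2 2 2 1).trans (hF23 2 2 1 2)).trans (hF12 2 1 2 2)
  have h0 := c0
  have h1_0 := c1 0
  have h1_1 := c1 1
  have h1_2 := c1 2
  have h2_0_0 := c2 0 0
  have h2_0_1 := c2 0 1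
  have h2_0_2 := c2 0 2
  have h2_1_0 := c2 1 0
  have h2_1_1 := c2 1 1
  have h2_1_2 := c2 1 2
  have h2_2_0 := c2 2 0
  have h2_2_1 := c2 2 1
  have h2_2_2 := c2 2 2
  have h3_0_0 := c3 0 0 0
  have h3_0_1 := c3 0 1 1
  have h3_0_2 := c3 0 2 2
  have h3_1_0 := c3 1 0 0
  have h3_1_1 := c3 1 1 1
  have h3_1_2 := c3 1 2 2
  have h3_2_0 := c3 2 0 0
  have h3_2_1 := c3 2 1 1
  have h3_2_2 := c3 2 2 2
  simp only [Fin.sum_univ_three] at h0 h1_0 h1_1 h1_2 h2_0_0 h2_0_1 h2_0_2 h2_1_0 h2_1_1 h2_1_2 h2_2_0 h2_2_1 h2_2_2 h3_0_0 h3_0_1 h3_0_2 h3_1_0 h3_1_1 h3_1_2 h3_2_0 h3_2_1 h3_2_2 ⊢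
  simp only [Pi.single_apply, Fin.reduceEq, reduceIte]
  simp only [eH10, eH20, eH21, eT010, eT020, eT021, eT100, eT101, eT102, eT110, eT120, eT121, eT200, eT201, eT202, eT210, eT211, eT212, eT220, eT221, eF0010, eF0020, eF0021, eF0100, eF0101, eF0102, eF0110, eF0120, eF0121, eF0200, eF0201, eF0202, eF0210, eF0211, eF0212, eF0220, eF0221, eF1000, eF1001, eF1002, eF1010, eF1011, eF1012, eF1020, eF1021, eF1022, eF1100, eF1101, eF1102, eF1110, eF1120, eF1121, eF1200, eF1201, eF1202, eF1210, eF1211, eF1212, eF1220, eF1221, eF2000, eF2001, eF2002, eF2010, eF2011, eF2012, eF2020, eF2021, eF2022, eF2100, eF2101, eF2102, eF2110, eF2111, eF2112, eF2120, eF2121, eF2122, eF2200, eF2201, eF2202, eF2210, eF2211, eF2212, eF2220, eF2221] at *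
  linear_combination (norm := ring1) ((2)*G 0 + (-1)*G 0*G 0*G 0 + (-1)*G 0*G 1*G 1 + (-1)*G 0*G 2*G 2) * h3_0_0 + ((-3)*Hm 0 0 + (2)*Hm 0 0*G 0*G 0 + (2)*Hm 0 0*G 1*G 1 + (2)*Hm 0 0*G 2*G 2 + Hm 1 1 + Hm 2 2) * h2_0_0 + ((2)*G 0 + (-1)*G 0*G 0*G 0 + (-1)*G 0*G 1*G 1 + (-1)*G 0*G 2*G 2) * h3_0_1 + ((-4)*Hm 0 1 + (2)*Hm 0 1*G 0*G 0 + (2)*Hm 0 1*G 1*G 1 + (2)*Hm 0 1*G 2*G 2) * h2_0_1 + ((2)*G 0 + (-1)*G 0*G 0*G 0 + (-1)*G 0*G 1*G 1 + (-1)*G 0*G 2*G 2) * h3_0_2 + ((-4)*Hm 0 2 + (2)*Hm 0 2*G 0*G 0 + (2)*Hm 0 2*G 1*G 1 + (2)*Hm 0 2*G 2*G 2) * h2_0_2 + ((-1)*G 0*G 0*G 1 + (2)*G 1 + (-1)*G 1*G 1*G 1 + (-1)*G 1*G 2*G 2) * h3_1_0 + ((-4)*Hm 0 1 + (2)*Hm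 0 1*G 0*G 0 + (2)*Hm 0 1*G 1*G 1 + (2)*Hm 0 1*G 2*G 2) * h2_1_0 + ((-1)*G 0*G 0*G 1 + (2)*G 1 + (-1)*G 1*G 1*G 1 + (-1)*G 1*G 2*G 2) * h3_1_1 + (Hm 0 0 + (-3)*Hm 1 1 + (2)*Hm 1 1*G 0*G 0 + (2)*Hm 1 1*G 1*G 1 + (2)*Hm 1 1*G 2*G 2 + Hm 2 2) * h2_1_1 + ((-1)*G 0*G 0*G 1 + (2)*G 1 + (-1)*G 1*G 1*G 1 + (-1)*G 1*G 2*G 2) * h3_1_2 + ((-4)*Hm 1 2 + (2)*Hm 1 2*G 0*G 0 + (2)*Hm 1 2*G 1*G 1 + (2)*Hm 1 2*G 2*G 2) * h2_1_2 + ((-1)*G 0*G 0*G 2 + (-1)*G 1*G 1*G 2 + (2)*G 2 + (-1)*G 2*G 2*G 2) * h3_2_0 + ((-4)*Hm 0 2 + (2)*Hm 0 2*G 0*G 0 + (2)*Hm 0 2*G 1*G 1 + (2)*Hm 0 2*G 2*G 2) * h2_2_0 + ((-1)*G 0*G 0*G 2 + (-1)*G 1*G 1*G 2 + (2)*G 2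 + (-1)*G 2*G 2*G 2) * h3_2_1 + ((-4)*Hm 1 2 + (2)*Hm 1 2*G 0*G 0 + (2)*Hm 1 2*G 1*G 1 + (2)*Hm 1 2*G 2*G 2) * h2_2_1 + ((-1)*G 0*G 0*G 2 + (-1)*G 1*G 1*G 2 + (2)*G 2 + (-1)*G 2*G 2*G 2) * h3_2_2 + (Hm 0 0 + Hm 1 1 + (-3)*Hm 2 2 + (2)*Hm 2 2*G 0*G 0 + (2)*Hm 2 2*G 1*G 1 + (2)*Hm 2 2*G 2*G 2) * h2_2_2 + ((6)*Hm 0 1*Hm 1 2*G 2 + (-6)*Hm 0 1*Hm 2 2*G 1 + (-6)*Hm 0 2*Hm 1 1*G 2 + (6)*Hm 0 2*Hm 1 2*G 1 + (6)*Hm 1 1*Hm 2 2*G 0 + (-6)*Hm 1 2*Hm 1 2*G 0 + Tm 0 0 0*G 0*G 0 + Tm 0 0 0*G 1*G 1 + Tm 0 0 0*G 2*G 2 + Tm 0 1 1*G 0*G 0 + Tm 0 1 1*G 1*G 1 + Tm 0 1 1*G 2*G 2 + Tm 0 2 2*G 0*G 0 + Tm 0 2 2*G 1*G 1 + Tm 0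 2 2*G 2*G 2) * h1_0 + ((-6)*Hm 0 0*Hm 1 2*G 2 + (6)*Hm 0 0*Hm 2 2*G 1 + (6)*Hm 0 1*Hm 0 2*G 2 + (-6)*Hm 0 1*Hm 2 2*G 0 + (-6)*Hm 0 2*Hm 0 2*G 1 + (6)*Hm 0 2*Hm 1 2*G 0 + Tm 0 0 1*G 0*G 0 + Tm 0 0 1*G 1*G 1 + Tm 0 0 1*G 2*G 2 + Tm 1 1 1*G 0*G 0 + Tm 1 1 1*G 1*G 1 + Tm 1 1 1*G 2*G 2 + Tm 1 2 2*G 0*G 0 + Tm 1 2 2*G 1*G 1 + Tm 1 2 2*G 2*G 2) * h1_1 + ((6)*Hm 0 0*Hm 1 1*G 2 + (-6)*Hm 0 0*Hm 1 2*G 1 + (-6)*Hm 0 1*Hm 0 1*G 2 + (6)*Hm 0 1*Hm 0 2*G 1 + (6)*Hm 0 1*Hm 1 2*G 0 + (-6)*Hm 0 2*Hm 1 1*G 0 + Tm 0 0 2*G 0*G 0 + Tm 0 0 2*G 1*G 1 + Tm 0 0 2*G 2*G 2 + Tm 1 1 2*G 0*G 0 + Tm 1 1 2*G 1*G 1 +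 Tm 1 1 2*G 2*G 2 + Tm 2 2 2*G 0*G 0 + Tm 2 2 2*G 1*G 1 + Tm 2 2 2*G 2*G 2) * h1_2 + ((-2)*Hm 0 0*Hm 0 0*Hm 0 0 + (-6)*Hm 0 0*Hm 0 1*Hm 0 1 + (-6)*Hm 0 0*Hm 0 2*Hm 0 2 + (-6)*Hm 0 0*Hm 1 1*Hm 2 2 + (6)*Hm 0 0*Hm 1 2*Hm 1 2 + (-6)*Hm 0 1*Hm 0 1*Hm 1 1 + (6)*Hm 0 1*Hm 0 1*Hm 2 2 + (-24)*Hm 0 1*Hm 0 2*Hm 1 2 + (6)*Hm 0 2*Hm 0 2*Hm 1 1 + (-6)*Hm 0 2*Hm 0 2*Hm 2 2 + (-2)*Hm 1 1*Hm 1 1*Hm 1 1 + (-6)*Hm 1 1*Hm 1 2*Hm 1 2 + (-6)*Hm 1 2*Hm 1 2*Hm 2 2 + (-2)*Hm 2 2*Hm 2 2*Hm 2 2) * h0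

theorem stmt_4 (U : Set (Fin 3 → ℝ)) (hU : IsOpen U)
    (d : (Fin 3 → ℝ) → ℝ) (hd : ContDiffOn ℝ (⊤ : ℕ∞) d U)
    (heik : ∀ x ∈ U, ∑ i, (pd i d x) ^ 2 = 1) :
    ∀ x ∈ U, d x = 0 →
      lap (lap d) x
        = lap (fun y => lap d (proj d y)) x
          + lap d x * ((lap d x) ^ 2 - 4 * gaussK d x) := by
  intro x₀ hx₀ hd0
  have sm0 : ContDiffOn ℝ ∞ d U := hd.of_le (by simp)
  have sm1 : ∀ i, ContDiffOn ℝ ∞ (pd i d) U := fun i => contDiffOn_pd hU sm0 i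
  have sm2 : ∀ i j, ContDiffOn ℝ ∞ (pd i (pd j d)) U := fun i j => contDiffOn_pd hU (sm1 j) i
  have sm3 : ∀ i j k, ContDiffOn ℝ ∞ (pd i (pd j (pd k d))) U :=
    fun i j k => contDiffOn_pd hU (sm2 j k) i
  have dAt : ∀ {f : (Fin 3 → ℝ) → ℝ}, ContDiffOn ℝ ∞ f U → ∀ {y}, y ∈ U →
      DifferentiableAt ℝ f y := fun {f} hf {y} hy => diffAt hU hf hy
  -- first differentiated eikonal identity
  have step1 : ∀ y ∈ U, ∀ j, ∑ i, pd i d y * pd j (pd i d) y = 0 := by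
    intro y hy j
    have h0 : pd j (fun z => ∑ i, (pd i d z) ^ 2) y = pd j (fun _ => (1:ℝ)) y :=
      pd_of_eqOn hU heik hy j
    rw [pd_const] at h0
    have h1 : pd j (fun z => ∑ i, (pd i d z) ^ 2) y
        = ∑ i, (pd j (pd i d) y * pd i d y + pd i d y * pd j (pd i d) y) := by
      rw [show (fun z => ∑ i, (pd i d z) ^ 2) = fun z => ∑ i, pd i d z * pd i d z by
        funext z; exact Finset.sum_congr rfl fun i _ => sq (pd i d z) ▸ (sq (pd i d z)).symm ▸ rfl]
      rw [pd_sum Finset.univ _ (fun k _ => ((dAt (sm1 k) hy).fun_mul (dAt (sm1 k) hy))) j]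
      exact Finset.sum_congr rfl fun k _ => pd_mul (dAt (sm1 k) hy) (dAt (sm1 k) hy) j
    have h2 : ∑ i, (pd j (pd i d) y * pd i d y + pd i d y * pd j (pd i d) y)
        = 2 * ∑ i, pd i d y * pd j (pd i d) y := by
      rw [Finset.mul_sum]
      exact Finset.sum_congr rfl fun k _ => by ring
    have h3 : 2 * ∑ i, pd i d y * pd j (pd i d) y = 0 := by rw [← h2, ← h1, h0]
    linarith
  -- second
  have step2 : ∀ y ∈ U, ∀ j k, ∑ i, (pd k (pd i d) y * pd j (pd i d) y
      + pd i d y * pd k (pd j (pd i d)) y) = 0 := by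
    intro y hy j k
    have h0 : pd k (fun z => ∑ i, pd i d z * pd j (pd i d) z) y = pd k (fun _ => (0:ℝ)) y :=
      pd_of_eqOn hU (fun z hz => step1 z hz j) hy k
    rw [pd_const] at h0
    rw [pd_sum Finset.univ _ (fun i _ => (dAt (sm1 i) hy).fun_mul (dAt (sm2 j i) hy)) k] at h0
    rw [← h0]
    exact Finset.sum_congr rfl fun i _ => (pd_mul (dAt (sm1 i) hy) (dAt (sm2 j i) hy) k).symm
  -- third
  have step3 : ∀ y ∈ U, ∀ j k l, ∑ i, (pd l (pd k (pd i d)) y * pd j (pd i d) y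
      + pd k (pd i d) y * pd l (pd j (pd i d)) y
      + (pd l (pd i d) y * pd k (pd j (pd i d)) y
        + pd i d y * pd l (pd k (pd j (pd i d))) y)) = 0 := by
    intro y hy j k l
    have h0 : pd l (fun z => ∑ i, (pd k (pd i d) z * pd j (pd i d) z
        + pd i d z * pd k (pd j (pd i d)) z)) y = pd l (fun _ => (0:ℝ)) y :=
      pd_of_eqOn hU (fun z hz => step2 z hz j k) hy l
    rw [pd_const] at h0
    rw [pd_sum Finset.univ _ (fun i _ => ((dAt (sm2 k i) hy).fun_mul (dAt (sm2 j i) hy)).fun_add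
      ((dAt (sm1 i) hy).fun_mul (dAt (sm3 k j i) hy))) l] at h0
    rw [← h0]
    refine Finset.sum_congr rfl fun i _ => ?_
    rw [pd_add ((dAt (sm2 k i) hy).fun_mul (dAt (sm2 j i) hy))
      ((dAt (sm1 i) hy).fun_mul (dAt (sm3 k j i) hy)) l,
      pd_mul (dAt (sm2 k i) hy) (dAt (sm2 j i) hy) l,
      pd_mul (dAt (sm1 i) hy) (dAt (sm3 k j i) hy) l]
  -- smoothness of lap d and proj components
  have smκ : ContDiffOn ℝ ∞ (lap d) U := by
    show ContDiffOn ℝ ∞ (fun z => ∑ k, pd k (pd k d) z) U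
    exact ContDiffOn.sum fun k _ => sm2 k k
  have smP : ∀ l, ContDiffOn ℝ ∞ (fun y => proj d y l) U := by
    intro l
    show ContDiffOn ℝ ∞ (fun y => y l - d y * pd l d y) U
    refine ContDiffOn.sub ?_ (sm0.mul (sm1 l))
    exact ((ContinuousLinearMap.proj l : (Fin 3 → ℝ) →L[ℝ] ℝ).contDiff).contDiffOn
  have contP : ContinuousOn (proj d) U := by
    rw [show proj d = (fun y l => proj d y l) from rfl]
    exact continuousOn_pi.2 fun l => (smP l).continuousOn
  have hpx : proj d x₀ = x₀ := by
    funext i; simp [proj, hd0]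
  have hVo : IsOpen (U ∩ proj d ⁻¹' U) := contP.isOpen_inter_preimage hU hU
  have hx₀V : x₀ ∈ U ∩ proj d ⁻¹' U := ⟨hx₀, by simp [Set.mem_preimage, hpx, hx₀]⟩
  -- expansion of pd of lap d
  have hκpd : ∀ y ∈ U, ∀ l, pd l (lap d) y = ∑ k, pd l (pd k (pd k d)) y := by
    intro y hy l
    show pd l (fun z => ∑ k, pd k (pd k d) z) y = _
    exact pd_sum Finset.univ _ (fun k _ => dAt (sm2 k k) hy) l
  have hκpd2 : ∀ y ∈ U, ∀ m l, pd m (pd l (lap d)) y = ∑ k, pd m (pd l (pd k (pd k d))) y := by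
    intro y hy m l
    rw [pd_of_eqOn hU (fun z hz => hκpd z hz l) hy m]
    exact pd_sum Finset.univ _ (fun k _ => dAt (sm3 l k k) hy) m
  -- LHS
  have hLHS : lap (lap d) x₀ = ∑ j, ∑ k, pd j (pd j (pd k (pd k d))) x₀ := by
    show ∑ j, pd j (pd j (lap d)) x₀ = _
    exact Finset.sum_congr rfl fun j _ => hκpd2 x₀ hx₀ j j
  -- derivative of components of proj on U
  have hPl : ∀ y ∈ U, ∀ i l, pd i (fun z => proj d z l) y
      = (Pi.single i 1 : Fin 3 → ℝ) l - (pd i d y * pd l d y + d y * pd i (pd l d) y) := by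
    intro y hy i l
    show pd i (fun z => z l - d z * pd l d z) y = _
    rw [pd_sub (by
        exact (ContinuousLinearMap.proj l : (Fin 3 → ℝ) →L[ℝ] ℝ).differentiableAt)
      ((dAt sm0 hy).fun_mul (dAt (sm1 l) hy)) i]
    rw [pd_coord, pd_mul (dAt sm0 hy) (dAt (sm1 l) hy) i]
  -- second derivative of proj components at x₀
  have hPl2 : ∀ i l, pd i (pd i (fun z => proj d z l)) x₀
      = -(pd i (pd i d) x₀ * pd l d x₀ + 2 * (pd i d x₀ * pd i (pd l d) x₀)) := by
    intro i l
    have e : ∀ y ∈ U, pd i (fun z => proj d z l) y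
        = (fun y => (Pi.single i 1 : Fin 3 → ℝ) l
            - (pd i d y * pd l d y + d y * pd i (pd l d) y)) y := fun y hy => hPl y hy i l
    rw [pd_of_eqOn hU e hx₀ i]
    rw [pd_sub (differentiableAt_const _) (((dAt (sm1 i) hx₀).fun_mul (dAt (sm1 l) hx₀)).fun_add
      ((dAt sm0 hx₀).fun_mul (dAt (sm2 i l) hx₀))) i]
    rw [pd_const]
    rw [pd_add ((dAt (sm1 i) hx₀).fun_mul (dAt (sm1 l) hx₀))
      ((dAt sm0 hx₀).fun_mul (dAt (sm2 i l) hx₀)) i]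
    rw [pd_mul (dAt (sm1 i) hx₀) (dAt (sm1 l) hx₀) i,
      pd_mul (dAt sm0 hx₀) (dAt (sm2 i l) hx₀) i, hd0]
    ring
  -- RHS1
  have hRHS1 : lap (fun y => lap d (proj d y)) x₀
      = ∑ i, ∑ l, ((∑ m, (∑ k, pd m (pd l (pd k (pd k d))) x₀)
            * ((Pi.single i 1 : Fin 3 → ℝ) m - pd i d x₀ * pd m d x₀))
          * ((Pi.single i 1 : Fin 3 → ℝ) l - pd i d x₀ * pd l d x₀)
        + (∑ k, pd l (pd k (pd k d)) x₀)
          * (-(pd i (pd i d) x₀ * pd l d x₀ + 2 * (pd i d x₀ * pd i (pd l d) x₀)))) := by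
    show ∑ i, pd i (pd i (fun y => lap d (proj d y))) x₀ = _
    refine Finset.sum_congr rfl fun i _ => ?_
    have e1 : ∀ y ∈ U ∩ proj d ⁻¹' U, pd i (fun z => lap d (proj d z)) y
        = (fun y => ∑ l, pd l (lap d) (proj d y) * pd i (fun z => proj d z l) y) y := by
      intro y hy
      exact pd_comp (dAt smκ hy.2) (fun l => dAt (smP l) hy.1) i
    rw [pd_of_eqOn hVo e1 hx₀V i]
    have hx₀P : proj d x₀ ∈ U := by rw [hpx]; exact hx₀
    have dA : ∀ l, DifferentiableAt ℝ (fun y => pd l (lap d) (proj d y)) x₀ := by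
      intro l
      exact DifferentiableAt.comp x₀ (dAt (contDiffOn_pd hU smκ l) hx₀P)
        (differentiableAt_pi.2 fun m => dAt (smP m) hx₀)
    have dB : ∀ l, DifferentiableAt ℝ (pd i (fun z => proj d z l)) x₀ := by
      intro l
      exact dAt (contDiffOn_pd hU (smP l) i) hx₀
    rw [pd_sum Finset.univ _ (fun l _ => (dA l).fun_mul (dB l)) i]
    refine Finset.sum_congr rfl fun l _ => ?_
    rw [pd_mul (dA l) (dB l) i]
    have hcomp : pd i (fun y => pd l (lap d) (proj d y)) x₀
        = ∑ m, pd m (pd l (lap d)) (proj d x₀) * pd i (fun z => proj d z m) x₀ :=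
      pd_comp (dAt (contDiffOn_pd hU smκ l) hx₀P) (fun m => dAt (smP m) hx₀) i
    rw [hcomp, hpx]
    rw [hκpd x₀ hx₀ l]
    congr 1
    · congr 1
      · refine Finset.sum_congr rfl fun m _ => ?_
        rw [hκpd2 x₀ hx₀ m l, hPl x₀ hx₀ i m, hd0]
        ring_nf
      · rw [hPl x₀ hx₀ i l, hd0]
        ring_nf
    · rw [hPl2 i l]
  -- gaussK
  have hgauss : gaussK d x₀ = ((∑ i, pd i (pd i d) x₀) ^ 2
      - ∑ i, ∑ j, pd i (pd j d) x₀ * pd j (pd i d) x₀) / 2 := by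
    simp [gaussK, lap, hess, Matrix.trace, Matrix.mul_apply, Matrix.diag]
  have hκval : lap d x₀ = ∑ i, pd i (pd i d) x₀ := rfl
  rw [hLHS, hRHS1, hκval, hgauss]
  exact key (fun i => pd i d x₀) (fun i j => pd i (pd j d) x₀)
    (fun i j k => pd i (pd j (pd k d)) x₀) (fun i j k l => pd i (pd j (pd k (pd l d))) x₀)
    (fun a b => pd_comm hU sm0 hx₀ a b)
    (fun a b c => pd_comm hU (sm1 c) hx₀ a b)
    (fun a b c => pd_of_eqOn hU (fun y hy => pd_comm hU sm0 hy b c) hx₀ a)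
    (fun a b c e => pd_comm hU (sm2 c e) hx₀ a b)
    (fun a b c e => pd_of_eqOn hU (fun y hy => pd_comm hU (sm1 e) hy b c) hx₀ a)
    (fun a b c e => pd_of_eqOn hU (fun y hy =>
      pd_of_eqOn hU (fun z hz => pd_comm hU sm0 hz c e) hy b) hx₀ a)
    (heik x₀ hx₀)
    (fun j => step1 x₀ hx₀ j)
    (fun j k => step2 x₀ hx₀ j k)
    (fun j k l => step3 x₀ hx₀ j k l)

end
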